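/- arXiv:2407.03569 — 2 statements merged into one kernel-verified Lean document; each statement's English description precedes it below -/
import Mathlib

section
/- Let δ > 0, α ∈ (0,1), H ≥ 1 a natural number, let e : ℕ → ℝ be a sequence with e_k ∈ {0,1} for all k, and let α_k be defined recursively by α_{k+1} = α_k + δ(α − e_k) from an initial value α_0 ∈ [0,1]. If α_H ∈ [−δ, 1 + δ], then 1 − α − (α_0 + δ)/(H·δ) ≤ (1/H) · Σ_{k=0}^{H−1} (1 − e_k) ≤ 1 − α + (1 − α_0 + δ)/(H·δ). -/
/-! The update telescopes: `δ · Σ_{k<H} (α − e_k) = α_H − α_0`, so the empirical coverage is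
exactly `1 − α + (α_H − α_0)/(Hδ)`, and the bounds are the range `[−δ, 1 + δ]` of `α_H`. -/

open Finset

theorem sub_zero_eq_mul_sum_of_forall_succ_eq {R : Type*} [CommRing R] (a e : ℕ → R) (δ α : R)
    (hrec : ∀ k, a (k + 1) = a k + δ * (α - e k)) (n : ℕ) :
    a n - a 0 = δ * ∑ k ∈ range n, (α - e k) := by
  rw [← sum_range_sub, mul_sum]
  exact sum_congr rfl fun k _ => by rw [hrec]; ring

theorem average_one_sub_eq_of_forall_succ_eq {K : Type*} [Field K] [CharZero K]
    (a e : ℕ → K) (δ α : K) (hδ : δ ≠ 0)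
    (hrec : ∀ k, a (k + 1) = a k + δ * (α - e k)) {H : ℕ} (hH : H ≠ 0) :
    1 / (H : K) * ∑ k ∈ range H, (1 - e k) = 1 - α + (a H - a 0) / (H * δ) := by
  have hsum : ∑ k ∈ range H, (1 - e k) = H * (1 - α) + ∑ k ∈ range H, (α - e k) := by
    simp only [sum_sub_distrib, sum_const, card_range, nsmul_eq_mul, mul_one]
    ring
  rw [hsum, sub_zero_eq_mul_sum_of_forall_succ_eq a e δ α hrec]
  have hH' : (H : K) ≠ 0 := Nat.cast_ne_zero.mpr hH
  field_simp

theorem acp_coverage_bounds_general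
    (δ : ℝ) (hδ : δ > 0) (α : ℝ)
    (H : ℕ) (hH : 1 ≤ H)
    (e : ℕ → ℝ)
    (αseq : ℕ → ℝ)
    (hrec : ∀ k : ℕ, αseq (k + 1) = αseq k + δ * (α - e k))
    (hHbd : αseq H ∈ Set.Icc (-δ) (1 + δ)) :
    1 - α - (αseq 0 + δ) / ((H : ℝ) * δ) ≤
        (1 / (H : ℝ)) * (∑ k ∈ Finset.range H, (1 - e k)) ∧
      (1 / (H : ℝ)) * (∑ k ∈ Finset.range H, (1 - e k)) ≤
        1 - α + (1 - αseq 0 + δ) / ((H : ℝ) * δ) := by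
  have hHδ : (0 : ℝ) < H * δ := mul_pos (by exact_mod_cast hH) hδ
  rw [average_one_sub_eq_of_forall_succ_eq αseq e δ α hδ.ne' hrec (by omega)]
  obtain ⟨hlo, hhi⟩ := hHbd
  constructor
  · rw [sub_eq_add_neg, ← neg_div]
    gcongr
    linarith
  · gcongr
    linarith

/-- Deterministic core of Lemma 3 (ACP Probability Guarantee): for the ACP
update `α_{k+1} = α_k + δ(α − e_k)` with binary miscoverage indicators `e_k`,
initial value `α_0 ∈ [0,1]`, and the standard invariant `α_H ∈ [−δ, 1+δ]`,
the empirical coverage `(1/H)·Σ (1 − e_k)` lies within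
`[1 − α − (α_0+δ)/(Hδ), 1 − α + (1−α_0+δ)/(Hδ)]`. -/
theorem acp_coverage_bounds
    (δ : ℝ) (hδ : δ > 0) (α : ℝ) (hα : α ∈ Set.Ioo (0 : ℝ) 1)
    (H : ℕ) (hH : 1 ≤ H)
    (e : ℕ → ℝ) (he : ∀ k : ℕ, e k = 0 ∨ e k = 1)
    (αseq : ℕ → ℝ)
    (hrec : ∀ k : ℕ, αseq (k + 1) = αseq k + δ * (α - e k))
    (h0 : αseq 0 ∈ Set.Icc (0 : ℝ) 1)
    (hHbd : αseq H ∈ Set.Icc (-δ) (1 + δ)) :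
    1 - α - (αseq 0 + δ) / ((H : ℝ) * δ) ≤
        (1 / (H : ℝ)) * (∑ k ∈ Finset.range H, (1 - e k)) ∧
      (1 / (H : ℝ)) * (∑ k ∈ Finset.range H, (1 - e k)) ≤
        1 - α + (1 - αseq 0 + δ) / ((H : ℝ) * δ) :=
  acp_coverage_bounds_general δ hδ α H hH e αseq hrec hHbd
end

section
/- Let (Ω, F, P) be a probability space, δ > 0, α ∈ (0,1), H ≥ 1 a natural number, let e_k : Ω → {0,1} (k = 0, …, H−1) be measurable random variables, and define random variables α_k pointwise by α_{k+1}(ω) = α_k(ω) + δ(α − e_k(ω)) from a constant initial value α_0 ∈ [0,1]. If α_H(ω) ∈ [−δ, 1 + δ] for P-almost every ω, then 1 − α − (α_0 + δ)/(H·δ) ≤ (1/H) · Σ_{k=0}^{H−1} P(e_k = 0) ≤ 1 − α + (1 − α_0 + δ)/(H·δ). -/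
open MeasureTheory

/-! Unrolling the update gives `α_H = α_0 + δ Σ_k (α − e_k)`, and `1 − e_k` is the indicator of
the coverage event `{e_k = 0}`. Taking expectations, `E[α_H] = α_0 + δ (H(α − 1) + Σ_k P(e_k = 0))`,
while `E[α_H] ∈ [−δ, 1 + δ]` because `α_H` lies there almost surely. Solving for the average
coverage gives both bounds. -/

theorem eq_add_mul_sum_of_succ_eq {a e : ℕ → ℝ} {δ α : ℝ}
    (hrec : ∀ k, a (k + 1) = a k + δ * (α - e k)) (n : ℕ) :
    a n = a 0 + δ * ∑ k ∈ Finset.range n, (α - e k) := by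
  induction n with
  | zero => simp
  | succ n ih => rw [hrec, ih, Finset.sum_range_succ]; ring

theorem one_sub_eq_indicator_of_zero_or_one {Ω : Type*} {f : Ω → ℝ}
    (hf : ∀ ω, f ω = 0 ∨ f ω = 1) :
    (fun ω => 1 - f ω) = {ω | f ω = 0}.indicator 1 := by
  funext ω
  rcases hf ω with h | h <;> simp [h]

section ZeroOneValued

variable {Ω : Type*} [MeasurableSpace Ω] {f : Ω → ℝ}

theorem integrable_one_sub_of_zero_or_one (μ : Measure Ω) [IsFiniteMeasure μ]
    (hmeas : Measurable f) (hf : ∀ ω, f ω = 0 ∨ f ω = 1) :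
    Integrable (fun ω => 1 - f ω) μ := by
  rw [one_sub_eq_indicator_of_zero_or_one hf]
  exact (integrable_const 1).indicator (hmeas (measurableSet_singleton 0))

theorem integral_one_sub_of_zero_or_one (μ : Measure Ω)
    (hmeas : Measurable f) (hf : ∀ ω, f ω = 0 ∨ f ω = 1) :
    ∫ ω, (1 - f ω) ∂μ = μ.real {ω | f ω = 0} := by
  rw [one_sub_eq_indicator_of_zero_or_one hf]
  exact integral_indicator_one (hmeas (measurableSet_singleton 0))

end ZeroOneValued

theorem integrable_and_integral_add_mul_sum_sub {Ω : Type*} [MeasurableSpace Ω]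
    (μ : Measure Ω) [IsProbabilityMeasure μ] (e : ℕ → Ω → ℝ) (hmeas : ∀ k, Measurable (e k))
    (he : ∀ k ω, e k ω = 0 ∨ e k ω = 1) (a δ α : ℝ) (n : ℕ) :
    Integrable (fun ω => a + δ * ∑ k ∈ Finset.range n, (α - e k ω)) μ ∧
      ∫ ω, (a + δ * ∑ k ∈ Finset.range n, (α - e k ω)) ∂μ =
        a + δ * (n * (α - 1) + ∑ k ∈ Finset.range n, μ.real {ω | e k ω = 0}) := by
  have hsplit : ∀ ω, a + δ * ∑ k ∈ Finset.range n, (α - e k ω) =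
      a + δ * (n * (α - 1)) + δ * ∑ k ∈ Finset.range n, (1 - e k ω) := by
    intro ω
    simp only [Finset.sum_sub_distrib, Finset.sum_const, Finset.card_range, nsmul_eq_mul]
    ring
  have hint : ∀ k ∈ Finset.range n, Integrable (fun ω => 1 - e k ω) μ :=
    fun k _ => integrable_one_sub_of_zero_or_one μ (hmeas k) (he k)
  have hint_sum := (integrable_finsetSum _ hint).const_mul δ
  simp only [hsplit]
  refine ⟨(integrable_const _).add hint_sum, ?_⟩
  rw [integral_add (integrable_const _) hint_sum, integral_const, integral_const_mul,
    integral_finsetSum _ hint]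
  simp only [probReal_univ, one_smul,
    integral_one_sub_of_zero_or_one μ (hmeas _) (he _)]
  ring

theorem acp_probability_guarantee_general
    {Ω : Type*} [MeasurableSpace Ω] (P : Measure Ω) [IsProbabilityMeasure P]
    (δ : ℝ) (hδ : δ > 0) (α : ℝ)
    (H : ℕ) (hH : 1 ≤ H)
    (e : ℕ → Ω → ℝ) (hmeas : ∀ k : ℕ, Measurable (e k))
    (he : ∀ k : ℕ, ∀ ω : Ω, e k ω = 0 ∨ e k ω = 1)
    (α₀ : ℝ)
    (αseq : ℕ → Ω → ℝ)
    (hinit : ∀ ω : Ω, αseq 0 ω = α₀)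
    (hrec : ∀ k : ℕ, ∀ ω : Ω, αseq (k + 1) ω = αseq k ω + δ * (α - e k ω))
    (hHbd : ∀ᵐ ω ∂P, αseq H ω ∈ Set.Icc (-δ) (1 + δ)) :
    1 - α - (α₀ + δ) / ((H : ℝ) * δ) ≤
        (1 / (H : ℝ)) * (∑ k ∈ Finset.range H, (P {ω | e k ω = 0}).toReal) ∧
      (1 / (H : ℝ)) * (∑ k ∈ Finset.range H, (P {ω | e k ω = 0}).toReal) ≤
        1 - α + (1 - α₀ + δ) / ((H : ℝ) * δ) := by
  have hunroll : αseq H = fun ω => α₀ + δ * ∑ k ∈ Finset.range H, (α - e k ω) := by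
    funext ω
    rw [eq_add_mul_sum_of_succ_eq (a := fun n => αseq n ω) (fun k => hrec k ω), hinit]
  obtain ⟨hint, hmean⟩ := integrable_and_integral_add_mul_sum_sub P e hmeas he α₀ δ α H
  rw [← hunroll] at hint hmean
  obtain ⟨hlow, hupp⟩ := (convex_Icc (-δ) (1 + δ)).integral_mem isClosed_Icc hHbd hint
  set c := ∑ k ∈ Finset.range H, P.real {ω | e k ω = 0}
  have hHpos : (0 : ℝ) < H := by exact_mod_cast hH
  have haverage : 1 / (H : ℝ) * c = 1 - α + (∫ ω, αseq H ω ∂P - α₀) / (H * δ) := by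
    rw [hmean]
    field_simp
    ring
  simp only [← measureReal_def]
  rw [haverage]
  constructor
  · rw [sub_eq_add_neg, ← neg_div]
    gcongr
    linarith
  · gcongr
    linarith

/-- Lemma 3 (ACP Probability Guarantee), probabilistic form: for the random ACP
update `α_{k+1}(ω) = α_k(ω) + δ(α − e_k(ω))` with binary miscoverage indicators
`e_k`, constant initial value `α_0 ∈ [0,1]`, and the a.e. invariant
`α_H(ω) ∈ [−δ, 1+δ]`, the time-averaged coverage `(1/H)·Σ P(e_k = 0)` lies
within `[1 − α − (α_0+δ)/(Hδ), 1 − α + (1−α_0+δ)/(Hδ)]`. -/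
theorem acp_probability_guarantee
    {Ω : Type*} [MeasurableSpace Ω] (P : Measure Ω) [IsProbabilityMeasure P]
    (δ : ℝ) (hδ : δ > 0) (α : ℝ) (hα : α ∈ Set.Ioo (0 : ℝ) 1)
    (H : ℕ) (hH : 1 ≤ H)
    (e : ℕ → Ω → ℝ) (hmeas : ∀ k : ℕ, Measurable (e k))
    (he : ∀ k : ℕ, ∀ ω : Ω, e k ω = 0 ∨ e k ω = 1)
    (α₀ : ℝ) (h0 : α₀ ∈ Set.Icc (0 : ℝ) 1)
    (αseq : ℕ → Ω → ℝ)
    (hinit : ∀ ω : Ω, αseq 0 ω = α₀)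
    (hrec : ∀ k : ℕ, ∀ ω : Ω, αseq (k + 1) ω = αseq k ω + δ * (α - e k ω))
    (hHbd : ∀ᵐ ω ∂P, αseq H ω ∈ Set.Icc (-δ) (1 + δ)) :
    1 - α - (α₀ + δ) / ((H : ℝ) * δ) ≤
        (1 / (H : ℝ)) * (∑ k ∈ Finset.range H, (P {ω | e k ω = 0}).toReal) ∧
      (1 / (H : ℝ)) * (∑ k ∈ Finset.range H, (P {ω | e k ω = 0}).toReal) ≤
        1 - α + (1 - α₀ + δ) / ((H : ℝ) * δ) :=
  acp_probability_guarantee_general P δ hδ α H hH e hmeas he α₀ αseq hinit hrec hHbd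
end
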